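/- Let C₁, C₂ ⊆ 𝔽₂ⁿ be binary codes containing the zero vector and C their Plotkin construction. Then dim(Ker(C)) = dim(Ker(C₁)) + dim(Ker(C₂)). -/

import Mathlib

def plotkin {n : ℕ} (C₁ C₂ : Set (Fin n → ZMod 2)) : Set (Fin (n + n) → ZMod 2) :=
  {w | ∃ u ∈ C₁, ∃ v ∈ C₂, w = Fin.append u (u + v)}

def ker {m : ℕ} (C : Set (Fin m → ZMod 2)) : Set (Fin m → ZMod 2) :=
  {x | (x + ·) '' C = C}

/-!
`Ker(C)` is the stabilizer of `C` under translation. The Plotkin code is the image of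
`C₁ × C₂` under the linear automorphism `(u, v) ↦ (u | u + v)`, which carries stabilizers to
stabilizers, and the stabilizer of a product of nonempty sets is the product of their
stabilizers. Hence `Ker(C) ≅ Ker(C₁) × Ker(C₂)` as 𝔽₂-spaces.
-/

open Set AddAction
open scoped Pointwise

namespace AddAction

variable {G H : Type*} [AddGroup G] [AddGroup H]

theorem stabilizer_set_prod {s : Set G} {t : Set H} (hs : s.Nonempty) (ht : t.Nonempty) :
    stabilizer (G × H) (s ×ˢ t) = (stabilizer G s).prod (stabilizer H t) := by
  ext ⟨g, h⟩
  have hprod : (g, h) +ᵥ s ×ˢ t = (g +ᵥ s) ×ˢ (h +ᵥ t) := prodMap_image_prod _ _ s t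
  simp only [mem_stabilizer_iff, AddSubgroup.mem_prod, hprod,
    prod_eq_prod_iff_of_nonempty (hs.vadd_set.prod ht.vadd_set)]

theorem stabilizer_image_addEquiv {F : Type*} [EquivLike F G H] [AddEquivClass F G H] (e : F)
    (s : Set G) : stabilizer H (e '' s) = (stabilizer G s).map (e : G →+ H) := by
  refine le_antisymm (fun h hh => ?_) (map_stabilizer_le (e : G →+ H) s)
  let e' : G ≃+ H := e
  refine ⟨e'.symm h, ?_, e'.apply_symm_apply h⟩
  have := map_stabilizer_le e'.symm.toAddMonoidHom (e '' s) ⟨h, hh, rfl⟩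
  simpa [e', image_image] using this

end AddAction

theorem Submodule.finrank_prod {K V W : Type*} [DivisionRing K] [AddCommGroup V] [Module K V]
    [AddCommGroup W] [Module K W] [FiniteDimensional K V] [FiniteDimensional K W]
    (p : Submodule K V) (q : Submodule K W) :
    Module.finrank K (p.prod q) = Module.finrank K p + Module.finrank K q := by
  have h := LinearMap.finrank_range_of_inj (f := p.subtype.prodMap q.subtype)
    (p.injective_subtype.prodMap q.injective_subtype)
  rw [LinearMap.range_prodMap, p.range_subtype, q.range_subtype] at h
  rw [h, Module.finrank_prod]

def Fin.appendLinearEquiv (R M : Type*) [Semiring R] [AddCommMonoid M] [Module R M] (m n : ℕ) :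
    ((Fin m → M) × (Fin n → M)) ≃ₗ[R] (Fin (m + n) → M) :=
  { Fin.appendEquiv m n with
    map_add' := fun x y => by
      ext i; refine Fin.addCases (fun i => ?_) (fun i => ?_) i <;> simp
    map_smul' := fun c x => by
      ext i; refine Fin.addCases (fun i => ?_) (fun i => ?_) i <;> simp }

def plotkinEquiv (R M : Type*) [Ring R] [AddCommGroup M] [Module R M] (n : ℕ) :
    ((Fin n → M) × (Fin n → M)) ≃ₗ[R] (Fin (n + n) → M) :=
  (LinearEquiv.skewProd (.refl R _) (.refl R _) LinearMap.id).trans (Fin.appendLinearEquiv R M n n)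

theorem plotkinEquiv_apply (R : Type*) {M : Type*} [Ring R] [AddCommGroup M] [Module R M] {n : ℕ}
    (u v : Fin n → M) : plotkinEquiv R M n (u, v) = Fin.append u (u + v) :=
  congrArg (Fin.append u) (add_comm v u)

theorem plotkin_eq_image {n : ℕ} (C₁ C₂ : Set (Fin n → ZMod 2)) :
    plotkin C₁ C₂ = plotkinEquiv (ZMod 2) (ZMod 2) n '' (C₁ ×ˢ C₂) := by
  ext w
  simp [plotkin, plotkinEquiv_apply, eq_comm, and_assoc]

theorem ker_eq_stabilizer {m : ℕ} (C : Set (Fin m → ZMod 2)) :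
    ker C = stabilizer (Fin m → ZMod 2) C :=
  Set.ext fun x => (image_vadd (a := x) (t := C)).congr_left

def kerSubmodule {m : ℕ} (C : Set (Fin m → ZMod 2)) : Submodule (ZMod 2) (Fin m → ZMod 2) :=
  AddSubgroup.toZModSubmodule 2 (stabilizer (Fin m → ZMod 2) C)

theorem coe_kerSubmodule {m : ℕ} (C : Set (Fin m → ZMod 2)) :
    (kerSubmodule C : Set (Fin m → ZMod 2)) = ker C :=
  (ker_eq_stabilizer C).symm

theorem span_ker {m : ℕ} (C : Set (Fin m → ZMod 2)) :
    Submodule.span (ZMod 2) (ker C) = kerSubmodule C := by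
  rw [← coe_kerSubmodule, Submodule.span_eq]

theorem kerSubmodule_plotkin {n : ℕ} {C₁ C₂ : Set (Fin n → ZMod 2)}
    (h₁ : (0 : Fin n → ZMod 2) ∈ C₁) (h₂ : (0 : Fin n → ZMod 2) ∈ C₂) :
    kerSubmodule (plotkin C₁ C₂) =
      ((kerSubmodule C₁).prod (kerSubmodule C₂)).map
        (plotkinEquiv (ZMod 2) (ZMod 2) n).toLinearMap := by
  apply SetLike.coe_injective
  rw [coe_kerSubmodule, ker_eq_stabilizer, plotkin_eq_image, stabilizer_image_addEquiv,
    stabilizer_set_prod ⟨0, h₁⟩ ⟨0, h₂⟩]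
  rfl

theorem plotkin_dim_ker {n : ℕ} (C₁ C₂ : Set (Fin n → ZMod 2))
    (h₁ : (0 : Fin n → ZMod 2) ∈ C₁) (h₂ : (0 : Fin n → ZMod 2) ∈ C₂) :
    Module.finrank (ZMod 2) (Submodule.span (ZMod 2) (ker (plotkin C₁ C₂))) =
      Module.finrank (ZMod 2) (Submodule.span (ZMod 2) (ker C₁)) +
      Module.finrank (ZMod 2) (Submodule.span (ZMod 2) (ker C₂)) := by
  rw [span_ker, span_ker, span_ker, kerSubmodule_plotkin h₁ h₂, LinearEquiv.finrank_map_eq,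
    Submodule.finrank_prod]
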